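/- Minimum eigenvalue of the per-arm design matrix (Corollary D.7): Let V ∈ ℝ^{d₁×d₁} and W ∈ ℝ^{d₂×d₂} be symmetric positive definite with λ_min(V) ≥ ρτ/2 and λ_min(W) ≥ ρτ/2 for some ρ, τ > 0, and let B ∈ ℝ^{d₁×d₂} satisfy ‖V^{−1/2} B W^{−1/2}‖ ≤ 1/2 in operator norm. Then the block matrix M = [[V, B],[Bᵀ, W]] satisfies λ_min(M) ≥ ρτ/4. -/

import Mathlib

open Matrix

noncomputable section

/-- Operator norm (largest singular value) of a real matrix. -/
def opNorm {m n : Type*} [Fintype m] [Fintype n] [DecidableEq n] (A : Matrix m n ℝ) : ℝ :=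
  ‖LinearMap.toContinuousLinearMap (Matrix.toEuclideanLin A)‖

/-- The smallest eigenvalue of a square real matrix. -/
def lambdaMin {n : Type*} [Fintype n] (A : Matrix n n ℝ) : ℝ :=
  sInf {c : ℝ | ∃ v : n → ℝ, v ≠ 0 ∧ A.mulVec v = c • v}

/-- `invSqrt A` is `A^{-1/2}` for positive (semi)definite `A` (junk value `0` otherwise). -/
def invSqrt {n : Type*} [Fintype n] [DecidableEq n] (A : Matrix n n ℝ) : Matrix n n ℝ :=
  haveI := Classical.dec A.PosSemidef
  if h : A.PosSemidef then (h.1.eigenvectorUnitary.1 * diagonal (Real.sqrt ∘ h.1.eigenvalues) *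
    (star h.1.eigenvectorUnitary : Matrix n n ℝ))⁻¹ else 0

/-!
Write a vector as `(x, y)` and put `u = V^{1/2} x`, `w = W^{1/2} y`, `Z = V^{-1/2} B W^{-1/2}`.
Then the quadratic form of `M = [[V, B], [Bᵀ, W]]` is `|u|² + |w|² + 2⟪u, Z w⟫`, and
`2|⟪u, Z w⟫| ≤ ‖Z‖ (|u|² + |w|²)`, so it dominates `(1 - ‖Z‖)(xᵀVx + yᵀWy)`. With `‖Z‖ ≤ 1/2` and
the bounds on `λ_min(V)`, `λ_min(W)` this is at least `(ρτ/4)|(x, y)|²`, and a symmetric matrix whose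
quadratic form dominates `c |v|²` has all its eigenvalues at least `c`.
-/

open scoped MatrixOrder
open WithLp

lemma two_mul_abs_dotProduct_mulVec_le {m n : Type*} [Fintype m] [Fintype n] [DecidableEq n]
    (A : Matrix m n ℝ) (u : m → ℝ) (w : n → ℝ) :
    2 * |u ⬝ᵥ A *ᵥ w| ≤ opNorm A * (u ⬝ᵥ u + w ⬝ᵥ w) := by
  set L := LinearMap.toContinuousLinearMap (toEuclideanLin A)
  have hinner : u ⬝ᵥ A *ᵥ w = inner ℝ (L (toLp 2 w)) (toLp 2 u) := rfl
  have hu : u ⬝ᵥ u = ‖toLp 2 u‖ ^ 2 := by rw [← real_inner_self_eq_norm_sq]; rfl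
  have hw : w ⬝ᵥ w = ‖toLp 2 w‖ ^ 2 := by rw [← real_inner_self_eq_norm_sq]; rfl
  have hL : 0 ≤ ‖L‖ := norm_nonneg L
  rw [hinner, hu, hw]
  calc 2 * |inner ℝ (L (toLp 2 w)) (toLp 2 u)| ≤ 2 * (‖L (toLp 2 w)‖ * ‖toLp 2 u‖) := by
        gcongr; exact abs_real_inner_le_norm _ _
    _ ≤ 2 * (‖L‖ * ‖toLp 2 w‖ * ‖toLp 2 u‖) := by gcongr; exact L.le_opNorm _
    _ ≤ ‖L‖ * (‖toLp 2 u‖ ^ 2 + ‖toLp 2 w‖ ^ 2) := by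
        nlinarith [mul_nonneg hL (sq_nonneg (‖toLp 2 u‖ - ‖toLp 2 w‖))]

section LambdaMin

variable {n : Type*} [Fintype n] {A : Matrix n n ℝ} {a : ℝ}

lemma lambdaMin_of_isEmpty [IsEmpty n] (A : Matrix n n ℝ) : lambdaMin A = 0 := by
  have hempty : {c : ℝ | ∃ v : n → ℝ, v ≠ 0 ∧ A *ᵥ v = c • v} = ∅ :=
    Set.eq_empty_of_forall_notMem fun _ ⟨v, hv, _⟩ ↦ hv (Subsingleton.elim v 0)
  rw [lambdaMin, hempty, Real.sInf_empty]

variable [DecidableEq n]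

lemma exists_mulVec_eq_smul_iff_mem_spectrum {c : ℝ} :
    (∃ v : n → ℝ, v ≠ 0 ∧ A *ᵥ v = c • v) ↔ c ∈ spectrum ℝ A := by
  rw [← spectrum_toLin', ← Module.End.hasEigenvalue_iff_mem_spectrum]
  constructor
  · rintro ⟨v, hv, hAv⟩
    exact Module.End.hasEigenvalue_of_hasEigenvector
      ⟨by simpa [Module.End.mem_eigenspace_iff] using hAv, hv⟩
  · intro hc
    obtain ⟨v, hv, hne⟩ := hc.exists_hasEigenvector
    exact ⟨v, hne, by simpa [Module.End.mem_eigenspace_iff] using hv⟩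

lemma lambdaMin_eq_sInf_spectrum (A : Matrix n n ℝ) : lambdaMin A = sInf (spectrum ℝ A) := by
  simp only [lambdaMin, exists_mulVec_eq_smul_iff_mem_spectrum, Set.ofPred_mem_eq]

lemma le_dotProduct_mulVec_of_le_lambdaMin (hA : A.IsHermitian) (ha : a ≤ lambdaMin A)
    (x : n → ℝ) : a * (x ⬝ᵥ x) ≤ x ⬝ᵥ A *ᵥ x := by
  have hle : algebraMap ℝ _ a ≤ A := by
    refine (algebraMap_le_iff_le_spectrum hA.isSelfAdjoint).2 fun c hc ↦ ha.trans ?_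
    rw [lambdaMin_eq_sInf_spectrum]
    exact csInf_le A.finite_real_spectrum.bddBelow hc
  have := (le_iff.1 hle).dotProduct_mulVec_nonneg x
  rwa [star_trivial, Algebra.algebraMap_eq_smul_one, sub_mulVec, smul_mulVec, one_mulVec,
    dotProduct_sub, dotProduct_smul, smul_eq_mul, sub_nonneg] at this

lemma le_lambdaMin_of_forall_le_dotProduct_mulVec [Nonempty n] (hA : A.IsHermitian)
    (h : ∀ x, a * (x ⬝ᵥ x) ≤ x ⬝ᵥ A *ᵥ x) : a ≤ lambdaMin A := by
  rw [lambdaMin_eq_sInf_spectrum]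
  refine le_csInf ⟨_, hA.eigenvalues_mem_spectrum_real (Classical.arbitrary n)⟩ fun c hc ↦ ?_
  obtain ⟨v, hv, hAv⟩ := exists_mulVec_eq_smul_iff_mem_spectrum.2 hc
  have hpos : 0 < v ⬝ᵥ v := by simpa using dotProduct_star_self_pos_iff.2 hv
  have := h v
  rw [hAv, dotProduct_smul, smul_eq_mul] at this
  exact le_of_mul_le_mul_right this hpos

end LambdaMin

lemma invSqrt_eq_inv_sqrt {n : Type*} [Fintype n] [DecidableEq n] {A : Matrix n n ℝ}
    (hA : A.PosSemidef) : invSqrt A = (CFC.sqrt A)⁻¹ := by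
  rw [invSqrt, dif_pos hA, CFC.sqrt_eq_real_sqrt A hA.nonneg, cfcₙ_eq_cfc, hA.1.cfc_eq,
    IsHermitian.cfc, Unitary.conjStarAlgAut_apply]
  rfl

section Blocks

variable {m n : Type*} [Fintype m] [Fintype n]

lemma dotProduct_mul_mulVec {l : Type*} [Fintype l] (A : Matrix l m ℝ) (B : Matrix m n ℝ)
    (x : l → ℝ) (y : n → ℝ) : x ⬝ᵥ (A * B) *ᵥ y = Aᵀ *ᵥ x ⬝ᵥ B *ᵥ y := by
  rw [← mulVec_mulVec, dotProduct_mulVec, mulVec_transpose]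

lemma one_sub_opNorm_mul_le_dotProduct_fromBlocks_mulVec [DecidableEq n] {S : Matrix m m ℝ}
    {T : Matrix n n ℝ} (hS : S.IsSymm) (hT : T.IsSymm) (Z : Matrix m n ℝ) (x : m → ℝ)
    (y : n → ℝ) :
    (1 - opNorm Z) * (x ⬝ᵥ (S * S) *ᵥ x + y ⬝ᵥ (T * T) *ᵥ y) ≤
      Sum.elim x y ⬝ᵥ fromBlocks (S * S) (S * Z * T) (S * Z * T)ᵀ (T * T) *ᵥ Sum.elim x y := by
  have hcross : y ⬝ᵥ (S * Z * T)ᵀ *ᵥ x = x ⬝ᵥ (S * Z * T) *ᵥ y := by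
    rw [dotProduct_mulVec, vecMul_transpose, dotProduct_comm]
  have hSS : x ⬝ᵥ (S * S) *ᵥ x = S *ᵥ x ⬝ᵥ S *ᵥ x := by rw [dotProduct_mul_mulVec, hS.eq]
  have hTT : y ⬝ᵥ (T * T) *ᵥ y = T *ᵥ y ⬝ᵥ T *ᵥ y := by rw [dotProduct_mul_mulVec, hT.eq]
  have hSZT : x ⬝ᵥ (S * Z * T) *ᵥ y = S *ᵥ x ⬝ᵥ Z *ᵥ (T *ᵥ y) := by
    rw [Matrix.mul_assoc, dotProduct_mul_mulVec, hS.eq, mulVec_mulVec]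
  simp only [fromBlocks_mulVec, sumElim_dotProduct_sumElim, dotProduct_add, Sum.elim_comp_inl,
    Sum.elim_comp_inr]
  rw [hcross, hSS, hTT, hSZT]
  have hZ := two_mul_abs_dotProduct_mulVec_le Z (S *ᵥ x) (T *ᵥ y)
  linarith [neg_abs_le (S *ᵥ x ⬝ᵥ Z *ᵥ (T *ᵥ y))]

lemma one_sub_opNorm_mul_le_dotProduct_fromBlocks_mulVec_of_posDef [DecidableEq m]
    [DecidableEq n] {V : Matrix m m ℝ} {W : Matrix n n ℝ} (hV : V.PosDef) (hW : W.PosDef)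
    (B : Matrix m n ℝ) (x : m → ℝ) (y : n → ℝ) :
    (1 - opNorm (invSqrt V * B * invSqrt W)) * (x ⬝ᵥ V *ᵥ x + y ⬝ᵥ W *ᵥ y) ≤
      Sum.elim x y ⬝ᵥ fromBlocks V B Bᵀ W *ᵥ Sum.elim x y := by
  have hVV : CFC.sqrt V * CFC.sqrt V = V := CFC.sqrt_mul_sqrt_self V hV.posSemidef.nonneg
  have hWW : CFC.sqrt W * CFC.sqrt W = W := CFC.sqrt_mul_sqrt_self W hW.posSemidef.nonneg
  have hVunit : IsUnit (CFC.sqrt V).det :=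
    (isUnit_iff_isUnit_det _).1 (isUnit_of_mul_isUnit_left (hVV ▸ hV.isUnit))
  have hWunit : IsUnit (CFC.sqrt W).det :=
    (isUnit_iff_isUnit_det _).1 (isUnit_of_mul_isUnit_left (hWW ▸ hW.isUnit))
  have hB : CFC.sqrt V * (invSqrt V * B * invSqrt W) * CFC.sqrt W = B := by
    rw [invSqrt_eq_inv_sqrt hV.posSemidef, invSqrt_eq_inv_sqrt hW.posSemidef, Matrix.mul_assoc,
      nonsing_inv_mul_cancel_right _ _ hWunit, mul_nonsing_inv_cancel_left _ _ hVunit]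
  have := one_sub_opNorm_mul_le_dotProduct_fromBlocks_mulVec
    (isHermitian_iff_isSymm.1 (CFC.sqrt_nonneg V).isSelfAdjoint)
    (isHermitian_iff_isSymm.1 (CFC.sqrt_nonneg W).isSelfAdjoint) (invSqrt V * B * invSqrt W) x y
  rwa [hVV, hWW, hB] at this

end Blocks

theorem min_eigenvalue_per_arm_design_matrix_general
    {d₁ d₂ : ℕ} (ρ τ : ℝ)
    (V : Matrix (Fin d₁) (Fin d₁) ℝ) (W : Matrix (Fin d₂) (Fin d₂) ℝ)
    (B : Matrix (Fin d₁) (Fin d₂) ℝ)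
    (hV : V.PosDef) (hW : W.PosDef)
    (hVmin : ρ * τ / 2 ≤ lambdaMin V) (hWmin : ρ * τ / 2 ≤ lambdaMin W)
    (hZ : opNorm (invSqrt V * B * invSqrt W) ≤ 1 / 2) :
    ρ * τ / 4 ≤ lambdaMin (Matrix.fromBlocks V B Bᵀ W) := by
  rcases isEmpty_or_nonempty (Fin d₁ ⊕ Fin d₂) with hempty | hne
  · -- without coordinates every `lambdaMin` is the junk value `sInf ∅ = 0`
    have : IsEmpty (Fin d₁) := ⟨fun i ↦ hempty.false (.inl i)⟩
    rw [lambdaMin_of_isEmpty] at hVmin ⊢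
    linarith
  have hM : (fromBlocks V B Bᵀ W).IsHermitian :=
    hV.1.fromBlocks (conjTranspose_eq_transpose_of_trivial B) hW.1
  refine le_lambdaMin_of_forall_le_dotProduct_mulVec hM fun v ↦ ?_
  obtain ⟨x, y, rfl⟩ : ∃ x y, v = Sum.elim x y := ⟨_, _, (Sum.elim_comp_inl_inr v).symm⟩
  have hx := le_dotProduct_mulVec_of_le_lambdaMin hV.1 hVmin x
  have hy := le_dotProduct_mulVec_of_le_lambdaMin hW.1 hWmin y
  have hq : 0 ≤ x ⬝ᵥ V *ᵥ x + y ⬝ᵥ W *ᵥ y := by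
    simpa using add_nonneg (hV.posSemidef.dotProduct_mulVec_nonneg x)
      (hW.posSemidef.dotProduct_mulVec_nonneg y)
  rw [sumElim_dotProduct_sumElim]
  calc ρ * τ / 4 * (x ⬝ᵥ x + y ⬝ᵥ y) ≤ (x ⬝ᵥ V *ᵥ x + y ⬝ᵥ W *ᵥ y) / 2 := by linarith
    _ ≤ (1 - opNorm (invSqrt V * B * invSqrt W)) * (x ⬝ᵥ V *ᵥ x + y ⬝ᵥ W *ᵥ y) := by
        linarith [mul_le_mul_of_nonneg_right hZ hq]
    _ ≤ _ := one_sub_opNorm_mul_le_dotProduct_fromBlocks_mulVec_of_posDef hV hW B x y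

/-- **Minimum eigenvalue of the per-arm design matrix (Corollary D.7).**
If `λ_min(V) ≥ ρτ/2`, `λ_min(W) ≥ ρτ/2` and `‖V^{-1/2} B W^{-1/2}‖ ≤ 1/2`, then the block
matrix `M = [[V,B],[Bᵀ,W]]` satisfies `λ_min(M) ≥ ρτ/4`. -/
theorem min_eigenvalue_per_arm_design_matrix
    {d₁ d₂ : ℕ} (ρ τ : ℝ) (hρ : 0 < ρ) (hτ : 0 < τ)
    (V : Matrix (Fin d₁) (Fin d₁) ℝ) (W : Matrix (Fin d₂) (Fin d₂) ℝ)
    (B : Matrix (Fin d₁) (Fin d₂) ℝ)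
    (hV : V.PosDef) (hW : W.PosDef)
    (hVmin : ρ * τ / 2 ≤ lambdaMin V) (hWmin : ρ * τ / 2 ≤ lambdaMin W)
    (hZ : opNorm (invSqrt V * B * invSqrt W) ≤ 1 / 2) :
    ρ * τ / 4 ≤ lambdaMin (Matrix.fromBlocks V B Bᵀ W) :=
  min_eigenvalue_per_arm_design_matrix_general ρ τ V W B hV hW hVmin hWmin hZ
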